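/- Let X be a Hilbert C*-module over a C*-algebra A, and let x, y ∈ X. Then ‖xa + y‖ ≥ ‖xa‖ for all a ∈ A if and only if ‖ya + x‖ ≥ ‖ya‖ for all a ∈ A. -/

import Mathlib

open scoped RightActions

/-- The Hilbert C⋆-module class as it stood in Mathlib (December 2024): right `A`-action via
`Aᵐᵒᵖ`, inner product `A`-linear on the right in the second argument. -/
class CStarModuleRight (A E : Type*) [NonUnitalSemiring A] [StarRing A] [Module ℂ A]
    [AddCommGroup E] [Module ℂ E] [PartialOrder A] [SMul Aᵐᵒᵖ E] [Norm A] [Norm E]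
    extends Inner A E where
  inner_add_right {x} {y} {z} : inner x (y + z) = inner x y + inner x z
  inner_self_nonneg {x} : 0 ≤ inner x x
  inner_self {x} : inner x x = 0 ↔ x = 0
  inner_op_smul_right {a : A} {x y : E} : inner x (y <• a) = inner x y * a
  inner_smul_right_complex {z : ℂ} {x} {y} : inner x (z • y) = z • inner x y
  star_inner x y : star (inner x y) = inner y x
  norm_eq_sqrt_norm_inner_self x : ‖x‖ = √‖inner x x‖

namespace CStarModuleRight

variable {A E : Type*} [NonUnitalSemiring A] [StarRing A] [Module ℂ A]
    [AddCommGroup E] [Module ℂ E] [PartialOrder A] [SMul Aᵐᵒᵖ E] [Norm A] [Norm E]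
    [CStarModuleRight A E]

lemma inner_add_left {x y z : E} : inner A (x + y) z = inner A x z + inner A y z := by
  rw [← star_inner z, inner_add_right, star_add, star_inner, star_inner]

lemma inner_op_smul_left {a : A} {x y : E} : inner A (x <• a) y = star a * inner A x y := by
  rw [← star_inner y, inner_op_smul_right, star_mul, star_inner]

@[simp]
lemma inner_zero_left {y : E} : inner A (0 : E) y = 0 := by
  rw [← star_inner y, ← zero_smul ℂ (0 : E), inner_smul_right_complex, zero_smul, star_zero]

lemma isSelfAdjoint_inner_self {x : E} : IsSelfAdjoint (inner A x x) := star_inner x x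

end CStarModuleRight

lemma CStarModuleRight.norm_sq_eq {A E : Type*} [CStarAlgebra A] [PartialOrder A]
    [NormedAddCommGroup E] [NormedSpace ℂ E]
    [Module Aᵐᵒᵖ E] [CStarModuleRight A E] {x : E} : ‖x‖ ^ 2 = ‖inner A x x‖ := by
  rw [CStarModuleRight.norm_eq_sqrt_norm_inner_self (A := A) x, Real.sq_sqrt (norm_nonneg _)]

private lemma orth_of_norm {A E : Type*} [CStarAlgebra A] [PartialOrder A] [StarOrderedRing A]
    [NormedAddCommGroup E] [NormedSpace ℂ E]
    [Module Aᵐᵒᵖ E] [CStarModuleRight A E] (x y : E)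
    (h : ∀ a : A, ‖x <• a + y‖ ≥ ‖x <• a‖) : (inner A x y : A) = 0 := by
  by_cases hx : x = 0
  · simp [hx]
  set b : A := inner A x y with hb
  set T : A := inner A x x with hT
  set Q : A := star b * b with hQ
  set Y : A := inner A y y with hY
  set P : A := star b * (T * b) with hP
  have hTne : T ≠ 0 := by
    simp only [hT, ne_eq, CStarModuleRight.inner_self]
    exact hx
  have hC : (0:ℝ) < ‖T‖ := norm_pos_iff.mpr hTne
  set C : ℝ := ‖T‖ with hCdef
  -- key estimate for every t ≥ 2/C
  have key : ∀ t : ℝ, 2 / C ≤ t → 2 * t / C * ‖P‖ ≤ ‖Y‖ := by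
    intro t ht
    have ht0 : 0 < t := lt_of_lt_of_le (by positivity) ht
    have ht' : 2 ≤ t * C := (div_le_iff₀ hC).mp ht
    have hcoef : 0 ≤ t^2 - 2*t/C := by
      rw [sub_nonneg, div_le_iff₀ hC]
      nlinarith
    set a : A := -(t • b) with ha
    have e1 : (inner A (x <• a) (x <• a) : A) = t^2 • P := by
      rw [CStarModuleRight.inner_op_smul_left, CStarModuleRight.inner_op_smul_right, ha, hP, ← hT]
      simp only [star_neg, star_smul, star_trivial, neg_mul, mul_neg, neg_neg, smul_neg,
        smul_mul_assoc, mul_smul_comm, smul_smul, pow_two]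
    have e2 : (inner A (x <• a) y : A) = -(t • Q) := by
      rw [CStarModuleRight.inner_op_smul_left, ha, hQ, ← hb]
      simp only [star_neg, star_smul, star_trivial, neg_mul, smul_mul_assoc]
    have e3 : (inner A y (x <• a) : A) = -(t • Q) := by
      rw [CStarModuleRight.inner_op_smul_right, ha, hQ, ← CStarModuleRight.star_inner x y, ← hb]
      simp only [mul_neg, mul_smul_comm]
    have hinner : (inner A (x <• a + y) (x <• a + y) : A) = t^2 • P - (2*t) • Q + Y := by
      rw [CStarModuleRight.inner_add_right, CStarModuleRight.inner_add_left, CStarModuleRight.inner_add_left,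
        e1, e2, e3, ← hY]
      module
    have hPQ : P ≤ C • Q := by
      have := CStarAlgebra.star_left_conjugate_le_norm_smul (a := b) (b := T)
        (CStarModuleRight.isSelfAdjoint_inner_self (x := x))
      rwa [mul_assoc, ← hCdef, ← hQ, ← hP] at this
    have hg0 : (0:A) ≤ t^2 • P - (2*t) • Q + Y := hinner ▸ CStarModuleRight.inner_self_nonneg
    have hgle : t^2 • P - (2*t) • Q + Y ≤ (t^2 - 2*t/C) • P + Y := by
      have h1 : (2*t/C) • P ≤ (2*t) • Q := by
        calc (2*t/C) • P ≤ (2*t/C) • (C • Q) :=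
              smul_le_smul_of_nonneg_left hPQ (by positivity)
          _ = (2*t) • Q := by rw [smul_smul]; congr 1; field_simp
      have h2 : t^2 • P - (2*t) • Q ≤ t^2 • P - (2*t/C) • P := sub_le_sub_left h1 _
      calc t^2 • P - (2*t) • Q + Y ≤ (t^2 • P - (2*t/C) • P) + Y := add_le_add_left h2 Y
        _ = (t^2 - 2*t/C) • P + Y := by module
    have hnorm1 : ‖x <• a‖^2 = t^2 * ‖P‖ := by
      rw [CStarModuleRight.norm_sq_eq (A := A), e1, norm_smul, Real.norm_eq_abs, abs_of_nonneg (by positivity)]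
    have hle : t^2 * ‖P‖ ≤ (t^2 - 2*t/C) * ‖P‖ + ‖Y‖ := by
      calc t^2 * ‖P‖ = ‖x <• a‖^2 := hnorm1.symm
        _ ≤ ‖x <• a + y‖^2 := pow_le_pow_left₀ (norm_nonneg _) (h a) 2
        _ = ‖(inner A (x <• a + y) (x <• a + y) : A)‖ := CStarModuleRight.norm_sq_eq
        _ = ‖t^2 • P - (2*t) • Q + Y‖ := by rw [hinner]
        _ ≤ ‖(t^2 - 2*t/C) • P + Y‖ := CStarAlgebra.norm_le_norm_of_nonneg_of_le hg0 hgle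
        _ ≤ ‖(t^2 - 2*t/C) • P‖ + ‖Y‖ := norm_add_le _ _
        _ = (t^2 - 2*t/C) * ‖P‖ + ‖Y‖ := by
            rw [norm_smul, Real.norm_eq_abs, abs_of_nonneg hcoef]
    nlinarith [norm_nonneg P]
  -- conclude ‖P‖ = 0
  have hPzero : ‖P‖ = 0 := by
    by_contra hne
    have hPpos : 0 < ‖P‖ := lt_of_le_of_ne (norm_nonneg P) (Ne.symm hne)
    set t : ℝ := max (2/C) (C * (‖Y‖ + 1) / (2 * ‖P‖)) with htd
    have h1 := key t (le_max_left _ _)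
    have h2 : C * (‖Y‖ + 1) / (2 * ‖P‖) ≤ t := le_max_right _ _
    have h3 : ‖Y‖ + 1 ≤ 2 * t / C * ‖P‖ := by
      rw [div_le_iff₀ (by positivity)] at h2
      rw [div_mul_eq_mul_div, le_div_iff₀ hC]
      nlinarith
    linarith
  have hPz : P = 0 := norm_eq_zero.mp hPzero
  have hxb : x <• b = 0 := by
    have he : (inner A (x <• b) (x <• b) : A) = P := by
      rw [CStarModuleRight.inner_op_smul_left, CStarModuleRight.inner_op_smul_right, ← hT, hP]
    exact CStarModuleRight.inner_self.mp (by rw [he, hPz])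
  have hQz : star b * b = 0 := by
    have he : (inner A (x <• b) y : A) = star b * b := by
      rw [CStarModuleRight.inner_op_smul_left, ← hb]
    rw [hxb] at he
    simpa using he.symm
  exact (CStarRing.star_mul_self_eq_zero_iff b).mp hQz

private lemma norm_of_orth {A E : Type*} [CStarAlgebra A] [PartialOrder A] [StarOrderedRing A]
    [NormedAddCommGroup E] [NormedSpace ℂ E]
    [Module Aᵐᵒᵖ E] [CStarModuleRight A E] (x y : E)
    (h : (inner A x y : A) = 0) : ∀ a : A, ‖x <• a + y‖ ≥ ‖x <• a‖ := by
  intro a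
  have h' : (inner A y x : A) = 0 := by rw [← CStarModuleRight.star_inner, h, star_zero]
  have hexp : (inner A (x <• a + y) (x <• a + y) : A)
      = inner A (x <• a) (x <• a) + inner A y y := by
    simp [CStarModuleRight.inner_add_right, CStarModuleRight.inner_add_left,
      CStarModuleRight.inner_op_smul_left, CStarModuleRight.inner_op_smul_right, h, h', mul_assoc]
  rw [ge_iff_le, CStarModuleRight.norm_eq_sqrt_norm_inner_self (A := A) (x <• a),
    CStarModuleRight.norm_eq_sqrt_norm_inner_self (A := A) (x <• a + y)]
  apply Real.sqrt_le_sqrt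
  rw [hexp]
  exact CStarAlgebra.norm_le_norm_of_nonneg_of_le CStarModuleRight.inner_self_nonneg
    (le_add_of_nonneg_right CStarModuleRight.inner_self_nonneg)

/-- `‖xa + y‖ ≥ ‖xa‖` for all `a` iff `‖ya + x‖ ≥ ‖ya‖` for all `a`. -/
theorem stmt_4 {A E : Type*} [CStarAlgebra A] [PartialOrder A] [StarOrderedRing A]
    [NormedAddCommGroup E] [NormedSpace ℂ E] [CompleteSpace E]
    [Module Aᵐᵒᵖ E] [CStarModuleRight A E] (x y : E) :
    (∀ a : A, ‖x <• a + y‖ ≥ ‖x <• a‖) ↔ (∀ a : A, ‖y <• a + x‖ ≥ ‖y <• a‖) := by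
  constructor
  · intro h
    exact norm_of_orth y x (by rw [← CStarModuleRight.star_inner, orth_of_norm x y h, star_zero])
  · intro h
    exact norm_of_orth x y (by rw [← CStarModuleRight.star_inner, orth_of_norm y x h, star_zero])
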